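/- Let X be an a-normal space with denominator function ζ and let x ∈ X. Then there exists a continuous function f : X → [0,1] with den(f(z)) dividing ζ(z) for all z ∈ X, such that den(f(x)) = ζ(x). -/

import Mathlib

open Classical in
/-- The denominator of a real number: the reduced denominator if rational, `0` if irrational. -/
noncomputable def den (r : ℝ) : ℕ :=
  if h : ∃ q : ℚ, (q : ℝ) = r then h.choose.den else 0

/-- An a-normal space structure on a topological space `X` with denominator function `ζ`. -/
def ANormal {X : Type*} [TopologicalSpace X] (ζ : X → ℕ) : Prop :=
  CompactSpace X ∧ T2Space X ∧
  (∀ n : ℕ, IsClosed {x : X | ζ x ∣ n}) ∧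
  ∀ x y : X, x ≠ y → ∃ U V : Set X, IsOpen U ∧ IsOpen V ∧ x ∈ U ∧ y ∈ V ∧
    Disjoint U V ∧ ∀ z ∈ (U ∪ V)ᶜ, ζ z = 0

/-!
A rational Urysohn construction. Enumerating `ℚ ∩ (0, 1)`, build open sets `U q` with
`closure (U r) ⊆ U s` for `r < s`, with `x ∈ U q` for `q > v` but `x ∉ closure (U q)` for
`q < v`, with each `closure (U q) \ U q` inside `ζ = 0`, and such that every
`z ∈ closure (U s) \ U r` has a fraction of denominator dividing `ζ z` in `[r, s]`. A new level
`U t` is squeezed between its neighbours `U r` and `U s` by separating two closed sets with a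
boundary where `ζ = 0`; closedness of the points lacking a fraction in `[t, s]` is what (N2)
provides, since only finitely many denominators avoid an interval. The Urysohn function
`f z = inf {q | z ∈ U q}` is then continuous, equals `v` at `x`, and cannot take a value in a gap
between consecutive fractions of denominator dividing `ζ z`. Choosing `v = 1 / ζ x`, or `v`
irrational when `ζ x = 0`, gives the theorem.
-/

open Set Filter Topology

theorem den_ratCast (q : ℚ) : den (q : ℝ) = q.den := by
  have h : ∃ p : ℚ, (p : ℝ) = q := ⟨q, rfl⟩
  rw [den, dif_pos h, Rat.cast_injective h.choose_spec]

theorem den_eq_zero_of_irrational {r : ℝ} (h : Irrational r) : den r = 0 :=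
  dif_neg fun ⟨q, hq⟩ => h ⟨q, hq⟩

theorem Rat.den_dvd_iff_exists_mul_eq_intCast {q : ℚ} {n : ℕ} :
    q.den ∣ n ↔ ∃ k : ℤ, q * n = k := by
  constructor
  · rintro ⟨c, rfl⟩
    exact ⟨q.num * c, by push_cast; rw [← mul_assoc, Rat.mul_den_eq_num]⟩
  · rintro ⟨k, hk⟩
    rcases eq_or_ne n 0 with rfl | hn
    · exact dvd_zero _
    have hq : q = k * (n : ℚ)⁻¹ := by rw [← hk]; field_simp
    rw [hq]
    exact (Rat.mul_den_dvd _ _).trans (by simp [hn])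

def HasFrac (n : ℕ) (r s : ℚ) : Prop :=
  ∃ q : ℚ, q.den ∣ n ∧ q ∈ Icc r s

section HasFrac

variable {m n : ℕ} {r s r' s' : ℚ}

theorem HasFrac.mono (h : HasFrac n r s) (hr : r' ≤ r) (hs : s ≤ s') : HasFrac n r' s' :=
  let ⟨q, hq, hqI⟩ := h
  ⟨q, hq, Icc_subset_Icc hr hs hqI⟩

theorem HasFrac.of_dvd (h : HasFrac m r s) (hmn : m ∣ n) : HasFrac n r s :=
  let ⟨q, hq, hqI⟩ := h
  ⟨q, hq.trans hmn, hqI⟩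

theorem HasFrac.left_or_right (h : HasFrac n r s) (t : ℚ) : HasFrac n r t ∨ HasFrac n t s := by
  obtain ⟨q, hq, hrq, hqs⟩ := h
  rcases le_total q t with hqt | htq
  exacts [Or.inl ⟨q, hq, hrq, hqt⟩, Or.inr ⟨q, hq, htq, hqs⟩]

theorem hasFrac_zero (h : r ≤ s) : HasFrac 0 r s :=
  ⟨r, dvd_zero _, left_mem_Icc.2 h⟩

theorem hasFrac_of_one_le_mul (h : 1 ≤ (s - r) * n) : HasFrac n r s := by
  have hn : (0 : ℚ) < n := by
    rcases Nat.eq_zero_or_pos n with rfl | hn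
    · norm_num at h
    · exact_mod_cast hn
  refine ⟨⌈r * n⌉ / n, Rat.den_dvd_iff_exists_mul_eq_intCast.2 ⟨⌈r * n⌉, by field_simp⟩, ?_, ?_⟩
  · rw [le_div_iff₀ hn]
    exact Int.le_ceil _
  · rw [div_le_iff₀ hn]
    linarith [Int.ceil_lt_add_one (r * n)]

theorem finite_setOf_not_hasFrac (h : r < s) : {n | ¬HasFrac n r s}.Finite := by
  refine (finite_Iic ⌈(s - r)⁻¹⌉₊).subset fun n hn => ?_
  by_contra hlt
  refine hn (hasFrac_of_one_le_mul ((inv_le_iff_one_le_mul₀' (sub_pos.2 h)).1 ?_))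
  exact (Nat.le_ceil _).trans (by exact_mod_cast (not_le.1 hlt).le)

/-- A `y` that is not a multiple of `1 / n` lies strictly between consecutive multiples `k / n`
and `(k + 1) / n`, and no fraction with denominator dividing `n` lies strictly in between. -/
theorem den_dvd_of_forall_hasFrac {y : ℝ} (hy : y ∈ Icc 0 1)
    (h : ∀ ρ σ : ℚ, 0 ≤ ρ → (ρ : ℝ) < y → y < σ → σ ≤ 1 → HasFrac n ρ σ) : den y ∣ n := by
  rcases eq_or_ne n 0 with rfl | hn
  · exact dvd_zero _
  rcases hy.2.eq_or_lt with rfl | hy1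
  · simp [show den 1 = 1 by simpa using den_ratCast 1]
  have hn' : (0 : ℝ) < n := by positivity
  set k := ⌊y * n⌋
  have hk : (k : ℝ) ≤ y * n := Int.floor_le _
  by_cases hyk : y = k / n
  · rw [hyk, show (k : ℝ) / n = ((k / n : ℚ) : ℝ) by push_cast; rfl, den_ratCast]
    exact Rat.den_dvd_iff_exists_mul_eq_intCast.2 ⟨k, by field_simp⟩
  have hky : (k : ℝ) / n < y :=
    lt_of_le_of_ne ((div_le_iff₀ hn').2 hk) (Ne.symm hyk)
  have hyk1 : y < min (((k : ℝ) + 1) / n) 1 :=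
    lt_min ((lt_div_iff₀ hn').2 (Int.lt_floor_add_one _)) hy1
  obtain ⟨ρ, hkρ, hρy⟩ := exists_rat_btwn hky
  obtain ⟨σ, hyσ, hσk⟩ := exists_rat_btwn hyk1
  have hk0 : (0 : ℝ) ≤ k / n :=
    div_nonneg (Int.cast_nonneg_iff.2 (Int.floor_nonneg.2 (mul_nonneg hy.1 hn'.le))) hn'.le
  obtain ⟨q, hq, hρq, hqσ⟩ := h ρ σ (by exact_mod_cast hk0.trans hkρ.le) hρy hyσ
    (by exact_mod_cast hσk.le.trans (min_le_right _ _))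
  obtain ⟨m, hm⟩ := Rat.den_dvd_iff_exists_mul_eq_intCast.1 hq
  have hmR : (q : ℝ) * n = m := by exact_mod_cast hm
  have hlo : (k : ℝ) < m := by
    rw [← hmR, ← div_lt_iff₀ hn']
    exact hkρ.trans_le (by exact_mod_cast hρq)
  have hhi : (m : ℝ) < k + 1 := by
    rw [← hmR, ← lt_div_iff₀ hn']
    exact (show (q : ℝ) ≤ σ by exact_mod_cast hqσ).trans_lt (hσk.trans_le (min_le_left _ _))
  have : k < m ∧ m < k + 1 := ⟨by exact_mod_cast hlo, by exact_mod_cast hhi⟩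
  omega

theorem exists_mem_Icc_den_eq (n : ℕ) :
    ∃ v : ℝ, v ∈ Icc 0 1 ∧ (∀ r s : ℚ, (r : ℝ) ≤ v → v ≤ s → HasFrac n r s) ∧ den v = n := by
  rcases eq_or_ne n 0 with rfl | hn
  · have h2 : √2 ≤ 2 := Real.sqrt_le_iff.2 ⟨by norm_num, by norm_num⟩
    refine ⟨√2 - 1, ⟨by linarith [Real.one_lt_sqrt_two], by linarith⟩,
      fun r s hr hs => hasFrac_zero (by exact_mod_cast hr.trans hs), ?_⟩
    exact den_eq_zero_of_irrational (by simpa using irrational_sqrt_two.sub_natCast 1)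
  have hden : ((n : ℚ)⁻¹).den = n := by rw [Rat.inv_natCast_den, if_neg hn]
  refine ⟨((n : ℚ)⁻¹ : ℚ), ⟨by positivity, ?_⟩, fun r s hr hs =>
    ⟨(n : ℚ)⁻¹, hden.dvd, by exact_mod_cast hr, by exact_mod_cast hs⟩, by rw [den_ratCast, hden]⟩
  push_cast
  exact inv_le_one_of_one_le₀ (by exact_mod_cast Nat.one_le_iff_ne_zero.2 hn)

end HasFrac

section Separation

variable {X : Type*} [TopologicalSpace X] {ζ : X → ℕ}

theorem isClosed_setOf_of_finite_of_dvd (hζ : ∀ n : ℕ, IsClosed {z : X | ζ z ∣ n})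
    {p : ℕ → Prop} (hp : {n | p n}.Finite) (hdvd : ∀ m n, m ∣ n → p n → p m) :
    IsClosed {z | p (ζ z)} := by
  have h : {z | p (ζ z)} = ⋃ n ∈ {n | p n}, {z | ζ z ∣ n} := by
    ext z
    simp only [mem_ofPred_eq, mem_iUnion, exists_prop]
    exact ⟨fun hz => ⟨ζ z, hz, dvd_rfl⟩, fun ⟨n, hn, hzn⟩ => hdvd _ _ hzn hn⟩
  rw [h]
  exact hp.isClosed_biUnion fun n _ => hζ n

theorem isClosed_setOf_not_hasFrac (hζ : ∀ n : ℕ, IsClosed {z : X | ζ z ∣ n}) {r s : ℚ}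
    (h : r < s) : IsClosed {z | ¬HasFrac (ζ z) r s} :=
  isClosed_setOf_of_finite_of_dvd hζ (finite_setOf_not_hasFrac h)
    fun _ _ hmn hn hm => hn (hm.of_dvd hmn)

def ZeroSeparated (ζ : X → ℕ) (A B : Set X) : Prop :=
  ∃ U V : Set X, IsOpen U ∧ IsOpen V ∧ A ⊆ U ∧ B ⊆ V ∧ Disjoint U V ∧ ∀ z ∈ (U ∪ V)ᶜ, ζ z = 0

theorem ZeroSeparated.symm {A B : Set X} (h : ZeroSeparated ζ A B) : ZeroSeparated ζ B A :=
  let ⟨U, V, hU, hV, hAU, hBV, hUV, h0⟩ := h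
  ⟨V, U, hV, hU, hBV, hAU, hUV.symm, by rwa [union_comm]⟩

theorem IsCompact.zeroSeparated {A B : Set X} (hA : IsCompact A)
    (h : ∀ a ∈ A, ZeroSeparated ζ {a} B) : ZeroSeparated ζ A B := by
  choose! U V hU hV haU hBV hUV h0 using h
  obtain ⟨t, htA, ht, hAt⟩ := hA.elim_finite_subcover_image hU
    fun a ha => mem_biUnion ha (haU a ha (mem_singleton a))
  refine ⟨⋃ a ∈ t, U a, ⋂ a ∈ t, V a, isOpen_biUnion fun a ha => hU a (htA ha),
    ht.isOpen_biInter fun a ha => hV a (htA ha), hAt, subset_iInter₂ fun a ha => hBV a (htA ha),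
    disjoint_iUnion₂_left.2 fun a ha => (hUV a (htA ha)).mono_right (biInter_subset_of_mem ha),
    fun z hz => ?_⟩
  simp only [mem_compl_iff, mem_union, mem_iUnion₂, mem_iInter₂, not_or, not_exists,
    not_forall] at hz
  obtain ⟨hzU, a, ha, hzV⟩ := hz
  exact h0 a (htA ha) z (by simp [hzU a ha, hzV])

theorem ANormal.zeroSeparated (hX : ANormal ζ) {A B : Set X} (hA : IsClosed A)
    (hB : IsClosed B) (hAB : Disjoint A B) : ZeroSeparated ζ A B := by
  have := hX.1
  refine hA.isCompact.zeroSeparated fun a ha => (hB.isCompact.zeroSeparated fun b hb => ?_).symm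
  obtain ⟨U, V, hU, hV, hbU, haV, hUV, h0⟩ :=
    hX.2.2.2 b a fun hba => disjoint_left.1 hAB ha (hba ▸ hb)
  exact ⟨U, V, hU, hV, singleton_subset_iff.2 hbU, singleton_subset_iff.2 haV, hUV, h0⟩

end Separation

section ScaleFun

variable {X : Type*}

/-- The `1` keeps the set nonempty, so that `sInf` never takes its junk value on `∅`. -/
noncomputable def scaleFun (U : ℚ → Set X) (z : X) : ℝ :=
  sInf (insert 1 ((↑) '' {q : ℚ | 0 ≤ q ∧ q ≤ 1 ∧ z ∈ U q}))

variable {U : ℚ → Set X} {z : X} {q : ℚ} {a : ℝ}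

theorem le_scaleFun_of_forall (h : ∀ q : ℚ, 0 ≤ q → q ≤ 1 → z ∈ U q → a ≤ q) (ha : a ≤ 1) :
    a ≤ scaleFun U z :=
  le_csInf (insert_nonempty _ _) <| by
    rintro _ (rfl | ⟨q, ⟨h0, h1, hq⟩, rfl⟩)
    exacts [ha, h q h0 h1 hq]

theorem scaleFun_nonneg : 0 ≤ scaleFun U z :=
  le_scaleFun_of_forall (fun _ h0 _ _ => by exact_mod_cast h0) zero_le_one

theorem scaleFun_le_of_mem_insert {b : ℝ}
    (hb : b ∈ insert 1 ((↑) '' {q : ℚ | 0 ≤ q ∧ q ≤ 1 ∧ z ∈ U q})) : scaleFun U z ≤ b :=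
  csInf_le ⟨0, by rintro _ (rfl | ⟨q, ⟨h0, -⟩, rfl⟩) <;> [norm_num; exact_mod_cast h0]⟩ hb

theorem scaleFun_le_one : scaleFun U z ≤ 1 :=
  scaleFun_le_of_mem_insert (mem_insert _ _)

theorem scaleFun_le (h0 : 0 ≤ q) (h1 : q ≤ 1) (hz : z ∈ U q) : scaleFun U z ≤ q :=
  scaleFun_le_of_mem_insert (mem_insert_of_mem _ ⟨q, ⟨h0, h1, hz⟩, rfl⟩)

theorem exists_lt_of_scaleFun_lt (h : scaleFun U z < a) (ha : a ≤ 1) :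
    ∃ q : ℚ, 0 ≤ q ∧ q ≤ 1 ∧ z ∈ U q ∧ (q : ℝ) < a := by
  obtain ⟨_, (rfl | ⟨q, ⟨h0, h1, hq⟩, rfl⟩), hlt⟩ := exists_lt_of_csInf_lt (insert_nonempty _ _) h
  exacts [absurd ha hlt.not_ge, ⟨q, h0, h1, hq, hlt⟩]

variable [TopologicalSpace X]

def IsScale (U : ℚ → Set X) : Prop :=
  ∀ r s : ℚ, 0 ≤ r → r < s → s ≤ 1 → closure (U r) ⊆ U s

theorem le_scaleFun (hU : IsScale U) (h1 : q ≤ 1) (hz : z ∉ U q) : (q : ℝ) ≤ scaleFun U z :=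
  le_scaleFun_of_forall (fun p h0 _ hp => by
    by_contra! hpq
    exact hz (hU p q h0 (by exact_mod_cast hpq) h1 (subset_closure hp))) (by exact_mod_cast h1)

theorem lowerSemicontinuous_scaleFun (hU : IsScale U) : LowerSemicontinuous (scaleFun U) := by
  intro z b hb
  rcases lt_or_ge b 0 with hb0 | hb0
  · exact Eventually.of_forall fun _ => hb0.trans_le scaleFun_nonneg
  obtain ⟨ρ, hbρ, hρ⟩ := exists_rat_btwn hb
  obtain ⟨σ, hρσ, hσ⟩ := exists_rat_btwn hρ
  have hρ0 : 0 ≤ ρ := by exact_mod_cast hb0.trans hbρ.le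
  have hσ1 : σ ≤ 1 := by exact_mod_cast hσ.le.trans scaleFun_le_one
  have hρσ' : ρ < σ := by exact_mod_cast hρσ
  have hz : z ∉ closure (U ρ) := fun h =>
    (scaleFun_le (hρ0.trans hρσ'.le) hσ1 (hU ρ σ hρ0 hρσ' hσ1 h)).not_gt hσ
  filter_upwards [isClosed_closure.isOpen_compl.mem_nhds hz] with w hw
  exact hbρ.trans_le (le_scaleFun hU (hρσ'.le.trans hσ1) fun h => hw (subset_closure h))

theorem upperSemicontinuous_scaleFun (hopen : ∀ q : ℚ, 0 ≤ q → q ≤ 1 → IsOpen (U q)) :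
    UpperSemicontinuous (scaleFun U) := by
  intro z b hb
  rcases lt_or_ge 1 b with hb1 | hb1
  · exact Eventually.of_forall fun _ => scaleFun_le_one.trans_lt hb1
  obtain ⟨q, h0, h1, hz, hqb⟩ := exists_lt_of_scaleFun_lt hb hb1
  filter_upwards [(hopen q h0 h1).mem_nhds hz] with w hw
  exact (scaleFun_le h0 h1 hw).trans_lt hqb

theorem continuous_scaleFun (hU : IsScale U) (hopen : ∀ q : ℚ, 0 ≤ q → q ≤ 1 → IsOpen (U q)) :
    Continuous (scaleFun U) :=
  continuous_iff_lower_upperSemicontinuous.2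
    ⟨lowerSemicontinuous_scaleFun hU, upperSemicontinuous_scaleFun hopen⟩

theorem den_scaleFun_dvd (hU : IsScale U) {n : ℕ}
    (h : ∀ r s : ℚ, 0 ≤ r → r < s → s ≤ 1 → z ∈ closure (U s) → z ∉ U r → HasFrac n r s) :
    den (scaleFun U z) ∣ n := by
  refine den_dvd_of_forall_hasFrac ⟨scaleFun_nonneg, scaleFun_le_one⟩
    fun ρ σ hρ0 hρ hσ hσ1 => ?_
  have hρσ : ρ < σ := by exact_mod_cast hρ.trans hσ
  refine h ρ σ hρ0 hρσ hσ1 ?_ fun hzρ => (scaleFun_le hρ0 (hρσ.le.trans hσ1) hzρ).not_gt hρ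
  obtain ⟨q, h0, -, hq, hqσ⟩ := exists_lt_of_scaleFun_lt hσ (by exact_mod_cast hσ1)
  exact subset_closure (hU q σ h0 (by exact_mod_cast hqσ) hσ1 (subset_closure hq))

theorem scaleFun_eq (hU : IsScale U) {v : ℝ} (hv : v ∈ Icc 0 1)
    (hlt : ∀ q : ℚ, 0 ≤ q → (q : ℝ) < v → z ∉ U q) (hgt : ∀ q : ℚ, v < q → q ≤ 1 → z ∈ U q) :
    scaleFun U z = v := by
  refine le_antisymm (le_of_forall_lt_rat_imp_le fun q hq => ?_)
    (le_of_forall_rat_lt_imp_le fun q hq => ?_)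
  · rcases le_or_gt q 1 with h1 | h1
    · exact scaleFun_le (by exact_mod_cast hv.1.trans hq.le) h1 (hgt q hq h1)
    · exact scaleFun_le_one.trans (by exact_mod_cast h1.le)
  · rcases lt_or_ge q 0 with h0 | h0
    · exact (show (q : ℝ) ≤ 0 by exact_mod_cast h0.le).trans scaleFun_nonneg
    · exact le_scaleFun hU (by exact_mod_cast hq.le.trans hv.2) (hlt q h0 hq)

end ScaleFun

section Construction

variable {X : Type*} [TopologicalSpace X]

structure PartialScale (ζ : X → ℕ) (x : X) (v : ℝ) where
  S : Set ℚ
  U : ℚ → Set X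
  zero_mem : 0 ∈ S
  one_mem : 1 ∈ S
  isOpen : ∀ q ∈ S, IsOpen (U q)
  closure_subset : ∀ r ∈ S, ∀ s ∈ S, r < s → closure (U r) ⊆ U s
  eq_zero_of_mem_closure_diff : ∀ q ∈ S, ∀ z ∈ closure (U q) \ U q, ζ z = 0
  hasFrac : ∀ r ∈ S, ∀ s ∈ S, r < s → ∀ z ∈ closure (U s) \ U r, HasFrac (ζ z) r s
  notMem_closure : ∀ q ∈ S, (q : ℝ) < v → x ∉ closure (U q)
  mem : ∀ q ∈ S, v < q → x ∈ U q

namespace PartialScale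

variable {ζ : X → ℕ} {x : X} {v : ℝ}

instance : Preorder (PartialScale ζ x v) where
  le P Q := P.S ⊆ Q.S ∧ ∀ q ∈ P.S, Q.U q = P.U q
  le_refl _ := ⟨subset_rfl, fun _ _ => rfl⟩
  le_trans _ _ _ hPQ hQR :=
    ⟨hPQ.1.trans hQR.1, fun q hq => (hQR.2 q (hPQ.1 hq)).trans (hPQ.2 q hq)⟩

theorem le_def {P Q : PartialScale ζ x v} :
    P ≤ Q ↔ P.S ⊆ Q.S ∧ ∀ q ∈ P.S, Q.U q = P.U q :=
  Iff.rfl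

theorem eq_zero_and_eq_one_of_lt {r s : ℚ} (hr : r ∈ ({0, 1} : Set ℚ))
    (hs : s ∈ ({0, 1} : Set ℚ)) (hrs : r < s) : r = 0 ∧ s = 1 := by
  rcases hr with rfl | rfl <;> rcases hs with rfl | rfl
  · exact absurd hrs (lt_irrefl _)
  · exact ⟨rfl, rfl⟩
  · norm_num at hrs
  · exact absurd hrs (lt_irrefl _)

def initial (hv : v ∈ Icc 0 1) : PartialScale ζ x v where
  S := {0, 1}
  U q := if 1 ≤ q then univ else ∅
  zero_mem := mem_insert _ _
  one_mem := mem_insert_of_mem _ rfl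
  isOpen q _ := by split_ifs <;> simp
  closure_subset r hr s hs hrs := by
    obtain ⟨rfl, rfl⟩ := eq_zero_and_eq_one_of_lt hr hs hrs
    simp
  eq_zero_of_mem_closure_diff q _ z hz := by split_ifs at hz <;> simp at hz
  hasFrac r hr s hs hrs _ _ := by
    obtain ⟨rfl, rfl⟩ := eq_zero_and_eq_one_of_lt hr hs hrs
    exact ⟨0, by simp, by norm_num⟩
  notMem_closure q hq hqv := by
    rcases hq with rfl | rfl
    · norm_num
    · norm_num at hqv
      exact absurd hv.2 hqv.not_ge
  mem q hq hvq := by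
    rcases hq with rfl | rfl
    · exact absurd hv.1 (by exact_mod_cast hvq.not_ge)
    · simp

structure IsAdmissible (P : PartialScale ζ x v) (t : ℚ) (W : Set X) : Prop where
  isOpen : IsOpen W
  closure_subset_of_lt : ∀ a ∈ P.S, a < t → closure (P.U a) ⊆ W
  closure_subset_of_gt : ∀ b ∈ P.S, t < b → closure W ⊆ P.U b
  eq_zero_of_mem_closure_diff : ∀ z ∈ closure W \ W, ζ z = 0
  hasFrac_of_lt : ∀ a ∈ P.S, a < t → ∀ z ∈ closure W \ P.U a, HasFrac (ζ z) a t
  hasFrac_of_gt : ∀ b ∈ P.S, t < b → ∀ z ∈ closure (P.U b) \ W, HasFrac (ζ z) t b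
  notMem_closure : (t : ℝ) < v → x ∉ closure W
  mem : v < t → x ∈ W

variable (P : PartialScale ζ x v) {r s t : ℚ} {W : Set X}

theorem update_eq_of_mem (ht : t ∉ P.S) {q : ℚ} (hq : q ∈ P.S) :
    Function.update P.U t W q = P.U q :=
  Function.update_of_ne (ne_of_mem_of_not_mem hq ht) _ _

def extend (ht : t ∉ P.S) (hW : P.IsAdmissible t W) : PartialScale ζ x v where
  S := insert t P.S
  U := Function.update P.U t W
  zero_mem := mem_insert_of_mem _ P.zero_mem
  one_mem := mem_insert_of_mem _ P.one_mem
  isOpen := by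
    rintro q (rfl | hq)
    · simpa using hW.isOpen
    · rw [P.update_eq_of_mem ht hq]
      exact P.isOpen q hq
  closure_subset := by
    rintro a (rfl | ha) b (rfl | hb) hab
    · exact absurd hab (lt_irrefl _)
    · rw [Function.update_self, P.update_eq_of_mem ht hb]
      exact hW.closure_subset_of_gt b hb hab
    · rw [Function.update_self, P.update_eq_of_mem ht ha]
      exact hW.closure_subset_of_lt a ha hab
    · rw [P.update_eq_of_mem ht ha, P.update_eq_of_mem ht hb]
      exact P.closure_subset a ha b hb hab
  eq_zero_of_mem_closure_diff := by
    rintro q (rfl | hq)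
    · simpa using hW.eq_zero_of_mem_closure_diff
    · rw [P.update_eq_of_mem ht hq]
      exact P.eq_zero_of_mem_closure_diff q hq
  hasFrac := by
    rintro a (rfl | ha) b (rfl | hb) hab
    · exact absurd hab (lt_irrefl _)
    · rw [Function.update_self, P.update_eq_of_mem ht hb]
      exact hW.hasFrac_of_gt b hb hab
    · rw [Function.update_self, P.update_eq_of_mem ht ha]
      exact hW.hasFrac_of_lt a ha hab
    · rw [P.update_eq_of_mem ht ha, P.update_eq_of_mem ht hb]
      exact P.hasFrac a ha b hb hab
  notMem_closure := by
    rintro q (rfl | hq)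
    · simpa using hW.notMem_closure
    · rw [P.update_eq_of_mem ht hq]
      exact P.notMem_closure q hq
  mem := by
    rintro q (rfl | hq)
    · simpa using hW.mem
    · rw [P.update_eq_of_mem ht hq]
      exact P.mem q hq

theorem le_extend (ht : t ∉ P.S) (hW : P.IsAdmissible t W) : P ≤ P.extend ht hW :=
  ⟨subset_insert _ _, fun _ hq => P.update_eq_of_mem ht hq⟩


theorem disjoint_separands
    (hvx : ∀ r s : ℚ, (r : ℝ) ≤ v → v ≤ s → HasFrac (ζ x) r s)
    (hr : r ∈ P.S) (hs : s ∈ P.S) (hrt : r < t) (hts : t < s) :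
    Disjoint (closure (P.U r) ∪ ({z | ¬HasFrac (ζ z) t s} ∩ closure (P.U s)) ∪
        {z | z = x ∧ v < t})
      ((P.U s)ᶜ ∪ ({z | ¬HasFrac (ζ z) r t} \ P.U r) ∪ {z | z = x ∧ (t : ℝ) < v}) := by
  have hrs := hrt.trans hts
  rw [disjoint_left]
  rintro z ((hzr | ⟨hts', hzs⟩) | ⟨rfl, hvt⟩) ((hzs' | ⟨hrt', hzr'⟩) | ⟨hzx, htv⟩)
  · exact hzs' (P.closure_subset r hr s hs hrs hzr)
  · exact hrt' (P.eq_zero_of_mem_closure_diff r hr z ⟨hzr, hzr'⟩ ▸ hasFrac_zero hrt.le)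
  · subst hzx
    exact P.notMem_closure r hr ((show (r : ℝ) < t by exact_mod_cast hrt).trans htv) hzr
  · exact hts' (P.eq_zero_of_mem_closure_diff s hs z ⟨hzs, hzs'⟩ ▸ hasFrac_zero hts.le)
  · rcases (P.hasFrac r hr s hs hrs z ⟨hzs, hzr'⟩).left_or_right t with h | h
    exacts [hrt' h, hts' h]
  · subst hzx
    rcases lt_or_ge (s : ℝ) v with hsv | hvs
    exacts [P.notMem_closure s hs hsv hzs, hts' (hvx t s htv.le hvs)]
  · exact hzs' (P.mem s hs (hvt.trans (by exact_mod_cast hts)))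
  · rcases lt_or_ge v r with hvr | hrv
    exacts [hzr' (P.mem r hr hvr), hrt' (hvx r t hrv hvt.le)]
  · exact hvt.not_gt htv

/-- The new level `W` is obtained by separating the two closed sets of
`disjoint_separands`, built from the neighbours `r < t < s` of `t` in `P.S`. -/
theorem exists_isAdmissible (hX : ANormal ζ)
    (hvx : ∀ r s : ℚ, (r : ℝ) ≤ v → v ≤ s → HasFrac (ζ x) r s)
    (hP : P.S.Finite) (ht : t ∈ Ioo 0 1) : ∃ W, P.IsAdmissible t W := by
  have := hX.2.1
  obtain ⟨r, ⟨hr, hrt⟩, hr_max⟩ := exists_max_image {a ∈ P.S | a < t} id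
    (hP.subset (sep_subset _ _)) ⟨0, P.zero_mem, ht.1⟩
  obtain ⟨s, ⟨hs, hts⟩, hs_min⟩ := exists_min_image {b ∈ P.S | t < b} id
    (hP.subset (sep_subset _ _)) ⟨1, P.one_mem, ht.2⟩
  have hsing : ∀ p : Prop, IsClosed {z | z = x ∧ p} := fun p =>
    Subsingleton.isClosed fun _ hz _ hw => hz.1.trans hw.1.symm
  have hclosed : ∀ {a b : ℚ}, a < b → IsClosed {z | ¬HasFrac (ζ z) a b} :=
    isClosed_setOf_not_hasFrac hX.2.2.1
  obtain ⟨W, V, hW, hV, hAW, hBV, hWV, hzero⟩ := hX.zeroSeparated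
    ((isClosed_closure.union ((hclosed hts).inter isClosed_closure)).union (hsing _))
    (((P.isOpen s hs).isClosed_compl.union ((hclosed hrt).inter
      (P.isOpen r hr).isClosed_compl)).union (hsing _))
    (P.disjoint_separands hvx hr hs hrt hts)
  have hWV' : Disjoint (closure W) V := hWV.closure_left hV
  have hnotB : ∀ z ∈ closure W, z ∉ V := fun z hz hzV => disjoint_left.1 hWV' hz hzV
  have hrW : closure (P.U r) ⊆ W := fun z hz => hAW (Or.inl (Or.inl hz))
  have hWs : closure W ⊆ P.U s := fun z hz => by_contra fun h =>
    hnotB z hz (hBV (Or.inl (Or.inl h)))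
  refine ⟨W, hW, fun a ha hat => ?_, fun b hb htb => ?_, fun z hz => hzero z ?_,
    fun a ha hat z hz => ?_, fun b hb htb z hz => ?_,
    fun htv hx => hnotB x hx (hBV (Or.inr ⟨rfl, htv⟩)), fun hvt => hAW (Or.inr ⟨rfl, hvt⟩)⟩
  · rcases (hr_max a ⟨ha, hat⟩).eq_or_lt with rfl | har
    exacts [hrW, (P.closure_subset a ha r hr har).trans (subset_closure.trans hrW)]
  · rcases (hs_min b ⟨hb, htb⟩).eq_or_lt with rfl | hsb
    exacts [hWs, hWs.trans (subset_closure.trans (P.closure_subset s hs b hb hsb))]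
  · exact fun h => h.elim hz.2 (hnotB z hz.1)
  · have har : a ≤ r := hr_max a ⟨ha, hat⟩
    by_cases hzr : z ∈ P.U r
    · have har' : a < r := har.lt_of_ne (by rintro rfl; exact hz.2 hzr)
      exact (P.hasFrac a ha r hr har' z ⟨subset_closure hzr, hz.2⟩).mono le_rfl hrt.le
    · by_contra h
      exact hnotB z hz.1 (hBV (Or.inl (Or.inr ⟨fun h' => h (h'.mono har le_rfl), hzr⟩)))
  · have hsb : s ≤ b := hs_min b ⟨hb, htb⟩
    by_cases hzs : z ∈ closure (P.U s)
    · by_contra h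
      exact hz.2 (hAW (Or.inl (Or.inr ⟨fun h' => h (h'.mono le_rfl hsb), hzs⟩)))
    · have hsb' : s < b := hsb.lt_of_ne (by rintro rfl; exact hzs hz.1)
      exact (P.hasFrac s hs b hb hsb' z ⟨hz.1, fun h => hzs (subset_closure h)⟩).mono hts.le le_rfl

theorem exists_le_finite_mem (hX : ANormal ζ)
    (hvx : ∀ r s : ℚ, (r : ℝ) ≤ v → v ≤ s → HasFrac (ζ x) r s) (hP : P.S.Finite) (t : ℚ) :
    ∃ Q : PartialScale ζ x v, P ≤ Q ∧ Q.S.Finite ∧ (t ∈ Ioo 0 1 → t ∈ Q.S) := by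
  by_cases h : t ∈ Ioo 0 1 ∧ t ∉ P.S
  · obtain ⟨W, hW⟩ := P.exists_isAdmissible hX hvx hP h.1
    exact ⟨P.extend h.2 hW, P.le_extend h.2 hW, hP.insert t, fun _ => mem_insert t P.S⟩
  · exact ⟨P, le_rfl, hP, fun ht => not_not.1 fun htS => h ⟨ht, htS⟩⟩

theorem exists_forall_le {C : ℕ → PartialScale ζ x v} (hC : Monotone C) :
    ∃ P : PartialScale ζ x v, ∀ k, C k ≤ P := by
  classical
  have hU : ∀ {i j q}, q ∈ (C i).S → q ∈ (C j).S → (C i).U q = (C j).U q := fun hi hj =>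
    ((hC (le_max_left _ _)).2 _ hi).symm.trans ((hC (le_max_right _ _)).2 _ hj)
  have hS : ∀ {i j q}, q ∈ (C i).S → q ∈ (C (max i j)).S := fun hq => (hC (le_max_left _ _)).1 hq
  have h : ∀ q, ∃ i, ∀ k, q ∈ (C k).S → q ∈ (C i).S := fun q => by
    by_cases hq : ∃ k, q ∈ (C k).S
    · exact hq.imp fun k hk _ _ => hk
    · exact ⟨0, fun k hk => (hq ⟨k, hk⟩).elim⟩
  choose idx hidx using h
  have hUk : ∀ {k q}, q ∈ (C k).S → (C (idx q)).U q = (C k).U q := fun hk =>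
    hU (hidx _ _ hk) hk
  let P : PartialScale ζ x v :=
    { S := ⋃ k, (C k).S
      U := fun q => (C (idx q)).U q
      zero_mem := mem_iUnion.2 ⟨0, (C 0).zero_mem⟩
      one_mem := mem_iUnion.2 ⟨0, (C 0).one_mem⟩
      isOpen := fun q hq => by
        obtain ⟨k, hk⟩ := mem_iUnion.1 hq
        exact hUk hk ▸ (C k).isOpen q hk
      closure_subset := fun r hr s hs hrs => by
        obtain ⟨i, hi⟩ := mem_iUnion.1 hr
        obtain ⟨j, hj⟩ := mem_iUnion.1 hs
        have hj' : s ∈ (C (max i j)).S := max_comm i j ▸ hS hj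
        rw [hUk (hS hi), hUk hj']
        exact (C _).closure_subset r (hS hi) s hj' hrs
      eq_zero_of_mem_closure_diff := fun q hq => by
        obtain ⟨k, hk⟩ := mem_iUnion.1 hq
        exact hUk hk ▸ (C k).eq_zero_of_mem_closure_diff q hk
      hasFrac := fun r hr s hs hrs => by
        obtain ⟨i, hi⟩ := mem_iUnion.1 hr
        obtain ⟨j, hj⟩ := mem_iUnion.1 hs
        have hj' : s ∈ (C (max i j)).S := max_comm i j ▸ hS hj
        rw [hUk (hS hi), hUk hj']
        exact (C _).hasFrac r (hS hi) s hj' hrs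
      notMem_closure := fun q hq => by
        obtain ⟨k, hk⟩ := mem_iUnion.1 hq
        exact hUk hk ▸ (C k).notMem_closure q hk
      mem := fun q hq => by
        obtain ⟨k, hk⟩ := mem_iUnion.1 hq
        exact hUk hk ▸ (C k).mem q hk }
  exact ⟨P, fun k => le_def.2 ⟨subset_iUnion (fun k => (C k).S) k, fun q hq => hUk hq⟩⟩

end PartialScale

variable {ζ : X → ℕ} {x : X} {v : ℝ}

theorem ANormal.exists_partialScale (hX : ANormal ζ) (hv : v ∈ Icc 0 1)
    (hvx : ∀ r s : ℚ, (r : ℝ) ≤ v → v ≤ s → HasFrac (ζ x) r s) :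
    ∃ P : PartialScale ζ x v, ∀ q ∈ Icc (0 : ℚ) 1, q ∈ P.S := by
  obtain ⟨e, he⟩ := exists_surjective_nat ℚ
  have step : ∀ (P : {P : PartialScale ζ x v // P.S.Finite}) (t : ℚ),
      ∃ Q : {P : PartialScale ζ x v // P.S.Finite}, P.1 ≤ Q.1 ∧ (t ∈ Ioo 0 1 → t ∈ Q.1.S) :=
    fun P t => by
      obtain ⟨Q, hPQ, hQ, ht⟩ := P.1.exists_le_finite_mem hX hvx P.2 t
      exact ⟨⟨Q, hQ⟩, hPQ, ht⟩
  choose next hle hmem using step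
  let C : ℕ → {P : PartialScale ζ x v // P.S.Finite} := fun n =>
    Nat.rec ⟨PartialScale.initial hv, (finite_singleton 1).insert 0⟩ (fun k P => next P (e k)) n
  obtain ⟨P, hP⟩ := PartialScale.exists_forall_le
    (monotone_nat_of_le_succ fun k => hle (C k) (e k) : Monotone fun k => (C k).1)
  refine ⟨P, fun q hq => ?_⟩
  rcases hq.1.eq_or_lt with rfl | hq0
  · exact P.zero_mem
  rcases hq.2.eq_or_lt with rfl | hq1
  · exact P.one_mem
  obtain ⟨k, rfl⟩ := he q
  exact (hP (k + 1)).1 (hmem (C k) (e k) ⟨hq0, hq1⟩)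

theorem ANormal.exists_continuous_den_dvd (hX : ANormal ζ) (hv : v ∈ Icc 0 1)
    (hvx : ∀ r s : ℚ, (r : ℝ) ≤ v → v ≤ s → HasFrac (ζ x) r s) :
    ∃ f : X → ℝ, Continuous f ∧ (∀ z, f z ∈ Icc 0 1) ∧ (∀ z, den (f z) ∣ ζ z) ∧ f x = v := by
  obtain ⟨P, hP⟩ := hX.exists_partialScale hv hvx
  have hU : IsScale P.U := fun r s hr hrs hs =>
    P.closure_subset r (hP r ⟨hr, hrs.le.trans hs⟩) s (hP s ⟨hr.trans hrs.le, hs⟩) hrs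
  refine ⟨scaleFun P.U, continuous_scaleFun hU fun q h0 h1 => P.isOpen q (hP q ⟨h0, h1⟩),
    fun z => ⟨scaleFun_nonneg, scaleFun_le_one⟩, fun z => den_scaleFun_dvd hU ?_,
    scaleFun_eq hU hv (fun q h0 hqv hx => ?_) fun q hvq h1 => ?_⟩
  · exact fun r s hr hrs hs hzs hzr =>
      P.hasFrac r (hP r ⟨hr, hrs.le.trans hs⟩) s (hP s ⟨hr.trans hrs.le, hs⟩) hrs z ⟨hzs, hzr⟩
  · have h1 : q ≤ 1 := by exact_mod_cast hqv.le.trans hv.2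
    exact P.notMem_closure q (hP q ⟨h0, h1⟩) hqv (subset_closure hx)
  · have h0 : 0 ≤ q := by exact_mod_cast hv.1.trans hvq.le
    exact P.mem q (hP q ⟨h0, h1⟩) hvq

end Construction

/-- In an a-normal space, for every point `x` there is an a-map
`f : X → [0,1]` attaining denominator `ζ x` at `x`. -/
theorem aspace_amap_attaining_denominator
    {X : Type*} [TopologicalSpace X] (ζ : X → ℕ) (hX : ANormal ζ) (x : X) :
    ∃ f : X → ℝ, Continuous f ∧ (∀ z, f z ∈ Set.Icc (0 : ℝ) 1) ∧
      (∀ z, den (f z) ∣ ζ z) ∧ den (f x) = ζ x := by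
  obtain ⟨v, hv, hvx, hden⟩ := exists_mem_Icc_den_eq (ζ x)
  obtain ⟨f, hf, hf01, hfden, hfx⟩ := hX.exists_continuous_den_dvd hv hvx
  exact ⟨f, hf, hf01, hfden, hfx ▸ hden⟩
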